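/- arXiv:2204.12888 — 2 statements merged into one kernel-verified Lean document; each statement's English description precedes it below -/
import Mathlib

section
/- Let b : ℤ → ℂ with Σ_{l∈ℤ} l²|b_l|² < ∞. Then the double sum Σ_{i,j≥0} |b_{i−j}|²·(1 − √((min(i,j)+1)/(max(i,j)+1)))² is finite and bounded by (π²/24)·Σ_{l∈ℤ} l²|b_l|². -/
/-!
Put `l = i - j` and `k = min i j`. Since `1 - √(m / M) ≤ (M - m) / (2 m)`, the `(i, j)` term is at
most `l² |b_l|² · 1 / (4 (k + 1)²)`, and `(i, j) ↦ (l, k)` is injective. The double sum is thus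
dominated by `(∑ l² |b_l|²) · ∑_k 1 / (4 (k + 1)²) = (π² / 24) ∑ l² |b_l|²`.
-/

open Real Function

lemma one_sub_sqrt_div_le {m M : ℝ} (hm : 0 < m) (hmM : m ≤ M) :
    1 - √(m / M) ≤ (M - m) / (2 * m) := by
  have hM : 0 < M := hm.trans_le hmM
  set x := √(m / M)
  have hm_eq : m = x ^ 2 * M := by rw [sq_sqrt (by positivity)]; field_simp
  rw [le_div_iff₀ (by positivity)]
  -- `M - m - 2 m (1 - x) = M (1 - x)² (1 + 2 x)` once `m = x² M`
  nlinarith [mul_nonneg (mul_nonneg hM.le (sq_nonneg (1 - x))) (by positivity : 0 ≤ 1 + 2 * x)]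

lemma one_sub_sqrt_div_sq_le {m M : ℝ} (hm : 0 < m) (hmM : m ≤ M) :
    (1 - √(m / M)) ^ 2 ≤ (M - m) ^ 2 / (4 * m ^ 2) := by
  have hx : √(m / M) ≤ 1 := sqrt_le_one.mpr (div_le_one_of_le₀ hmM (hm.le.trans hmM))
  calc (1 - √(m / M)) ^ 2 ≤ ((M - m) / (2 * m)) ^ 2 :=
        pow_le_pow_left₀ (by linarith) (one_sub_sqrt_div_le hm hmM) 2
    _ = (M - m) ^ 2 / (4 * m ^ 2) := by ring

lemma one_sub_sqrt_min_div_max_sq_le {x y : ℝ} (hx : 0 ≤ x) (hy : 0 ≤ y) :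
    (1 - √((min x y + 1) / (max x y + 1))) ^ 2 ≤ (x - y) ^ 2 / (4 * (min x y + 1) ^ 2) := by
  have h := one_sub_sqrt_div_sq_le (m := min x y + 1) (M := max x y + 1)
    (by positivity) (by linarith [min_le_max (a := x) (b := y)])
  rwa [add_sub_add_right_eq_sub, max_sub_min_eq_abs', sq_abs] at h

lemma hasSum_one_div_nat_add_one_sq :
    HasSum (fun k : ℕ => 1 / ((k : ℝ) + 1) ^ 2) (π ^ 2 / 6) := by
  simpa using (hasSum_nat_add_iff' 1).mpr hasSum_zeta_two

lemma injective_sub_min : Injective fun p : ℕ × ℕ => ((p.1 : ℤ) - p.2, min p.1 p.2) := by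
  rintro ⟨i, j⟩ ⟨i', j'⟩ h
  simp only [Prod.mk.injEq] at h ⊢
  omega

theorem summable_and_tsum_le_tsum_mul_tsum_of_injective {α β γ : Type*}
    {F : α → ℝ} {f : β → ℝ} {g : γ → ℝ} (e : α → β × γ) (he : Injective e)
    (hF₀ : ∀ a, 0 ≤ F a) (hF : ∀ a, F a ≤ f (e a).1 * g (e a).2)
    (hf₀ : ∀ b, 0 ≤ f b) (hg₀ : ∀ c, 0 ≤ g c) (hf : Summable f) (hg : Summable g) :
    Summable F ∧ ∑' a, F a ≤ (∑' b, f b) * ∑' c, g c := by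
  have hfg : Summable fun q : β × γ => f q.1 * g q.2 := hf.mul_of_nonneg hg hf₀ hg₀
  have hFs : Summable F := .of_nonneg_of_le hF₀ hF (hfg.comp_injective he)
  refine ⟨hFs, ?_⟩
  rw [hf.tsum_mul_tsum hg hfg]
  exact hFs.tsum_le_tsum_of_inj e he (fun q _ => mul_nonneg (hf₀ _) (hg₀ _)) hF hfg

theorem double_sum_finite_and_bounded (b : ℤ → ℂ)
    (hb : Summable fun l : ℤ => (l : ℝ) ^ 2 * ‖b l‖ ^ 2) :
    Summable (fun p : ℕ × ℕ =>
      ‖b ((p.1 : ℤ) - p.2)‖ ^ 2 *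
        (1 - Real.sqrt ((min p.1 p.2 + 1 : ℝ) / (max p.1 p.2 + 1))) ^ 2) ∧
    (∑' p : ℕ × ℕ,
      ‖b ((p.1 : ℤ) - p.2)‖ ^ 2 *
        (1 - Real.sqrt ((min p.1 p.2 + 1 : ℝ) / (max p.1 p.2 + 1))) ^ 2) ≤
      Real.pi ^ 2 / 24 * ∑' l : ℤ, (l : ℝ) ^ 2 * ‖b l‖ ^ 2 := by
  have hg := hasSum_one_div_nat_add_one_sq.div_const 4
  have hterm (p : ℕ × ℕ) :
      ‖b ((p.1 : ℤ) - p.2)‖ ^ 2 * (1 - √((min p.1 p.2 + 1 : ℝ) / (max p.1 p.2 + 1))) ^ 2 ≤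
        (((p.1 : ℤ) - p.2 : ℤ) : ℝ) ^ 2 * ‖b ((p.1 : ℤ) - p.2)‖ ^ 2 *
          (1 / (((min p.1 p.2 : ℕ) : ℝ) + 1) ^ 2 / 4) := by
    have h := one_sub_sqrt_min_div_max_sq_le (Nat.cast_nonneg (α := ℝ) p.1) (Nat.cast_nonneg p.2)
    rw [← Nat.cast_min, ← Nat.cast_max] at h
    calc _ ≤ ‖b ((p.1 : ℤ) - p.2)‖ ^ 2 *
          (((p.1 : ℝ) - p.2) ^ 2 / (4 * (((min p.1 p.2 : ℕ) : ℝ) + 1) ^ 2)) :=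
          mul_le_mul_of_nonneg_left h (by positivity)
      _ = _ := by push_cast; field_simp
  obtain ⟨hs, hle⟩ := summable_and_tsum_le_tsum_mul_tsum_of_injective _ injective_sub_min
    (fun p => by positivity) hterm (fun l => by positivity) (fun k => by positivity) hb hg.summable
  exact ⟨hs, hle.trans_eq (by rw [hg.tsum_eq]; ring)⟩
end

section
/- Let b : ℤ → ℂ with M := sup_{l∈ℤ}(1+|l|)|b_l| < ∞ and Σ_{l} l²|b_l|² < ∞. Define for i,j ≥ 0: τ_{i,j} = √((min(i,j)+1)/(max(i,j)+1))·b_{i−j}. Then for each fixed j, Σ_{i≥0} |τ_{i,j} − b_{i−j}|² ≤ (π²/24)·Σ_{l∈ℤ} l²|b_l|², i.e. the columns of the difference matrix are uniformly square-summable. -/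
/-! The weight `√((min i j + 1)/(max i j + 1))` differs from `1` by at most `|i - j|/2`, so the
`i`-th entry of column `j` is bounded by `(i - j)² |b_{i-j}|² / 4`; since `i ↦ i - j` is injective,
the column sum is at most `¼ ∑ₗ l² |b_l|²`, and `¼ ≤ π²/24`. -/

open Function

lemma summable_and_tsum_le_of_le_comp_injective {α β : Type*} {f : α → ℝ} {F : β → ℝ}
    {e : α → β} {c : ℝ} (hF : Summable F) (hF0 : ∀ y, 0 ≤ F y) (he : Injective e)
    (hc : 0 ≤ c) (hf0 : ∀ x, 0 ≤ f x) (hfF : ∀ x, f x ≤ c * F (e x)) :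
    Summable f ∧ ∑' x, f x ≤ c * ∑' y, F y := by
  have hFe : Summable (F ∘ e) := hF.comp_injective he
  have hf : Summable f := .of_nonneg_of_le hf0 hfF (hFe.mul_left c)
  refine ⟨hf, ?_⟩
  calc ∑' x, f x ≤ ∑' x, c * F (e x) := hf.tsum_le_tsum hfF (hFe.mul_left c)
    _ = c * ∑' x, (F ∘ e) x := tsum_mul_left
    _ ≤ c * ∑' y, F y := mul_le_mul_of_nonneg_left (tsum_comp_le_tsum_of_inj hF hF0 he) hc

lemma one_sub_sqrt_div_le_s18 {a c : ℝ} (ha : 0 ≤ a) (hac : a ≤ c) (hc : 0 < c) :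
    1 - √(a / c) ≤ (c - a) / (c + a) := by
  set x := a / c with hx
  have hx0 : 0 ≤ x := by positivity
  have hx1 : x ≤ 1 := (div_le_one hc).mpr hac
  have hle : x ≤ √x := Real.le_sqrt_of_sq_le (by nlinarith)
  -- `1 - √x = (1 - x)/(1 + √x)` and `x ≤ √x`
  calc 1 - √x ≤ (1 - x) / (1 + x) := by
        rw [le_div_iff₀ (by linarith)]
        nlinarith [Real.sqrt_le_one.mpr hx1, Real.mul_self_sqrt hx0]
    _ = (c - a) / (c + a) := by rw [hx]; field_simp

lemma sq_sqrt_min_div_max_sub_one_le (i j : ℕ) :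
    (√((min i j + 1 : ℝ) / (max i j + 1)) - 1) ^ 2 ≤ ((i : ℝ) - j) ^ 2 / 4 := by
  set a : ℝ := min i j + 1
  set c : ℝ := max i j + 1
  have ha : 1 ≤ a := by simp [a]
  have hac : a ≤ c := by simp only [a, c]; gcongr; exact min_le_max
  have hdiff : c - a = |(i : ℝ) - j| := by
    simp only [a, c]; rw [Nat.cast_max, Nat.cast_min, ← max_sub_min_eq_abs']; ring
  have hsqrt_le : √(a / c) ≤ 1 := Real.sqrt_le_one.mpr ((div_le_one (by linarith)).mpr hac)
  have hbound : 1 - √(a / c) ≤ (c - a) / 2 :=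
    (one_sub_sqrt_div_le_s18 (by linarith) hac (by linarith)).trans
      (div_le_div_of_nonneg_left (by linarith) (by norm_num) (by linarith))
  calc (√(a / c) - 1) ^ 2 = (1 - √(a / c)) ^ 2 := by ring
    _ ≤ ((c - a) / 2) ^ 2 := pow_le_pow_left₀ (by linarith) hbound 2
    _ = ((i : ℝ) - j) ^ 2 / 4 := by rw [hdiff, div_pow, sq_abs]; norm_num

lemma norm_ofReal_mul_sub_self (r : ℝ) (z : ℂ) : ‖(r : ℂ) * z - z‖ = |r - 1| * ‖z‖ := by
  rw [← sub_one_mul, ← Complex.ofReal_one, ← Complex.ofReal_sub, norm_mul, Complex.norm_real,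
    Real.norm_eq_abs]

lemma norm_column_entry_sq_le (b : ℤ → ℂ) (i j : ℕ) :
    ‖√((min i j + 1 : ℝ) / (max i j + 1)) * b ((i : ℤ) - j) - b ((i : ℤ) - j)‖ ^ 2 ≤
      1 / 4 * ((((i : ℤ) - j : ℤ) : ℝ) ^ 2 * ‖b ((i : ℤ) - j)‖ ^ 2) := by
  rw [norm_ofReal_mul_sub_self, mul_pow, sq_abs]
  have h := sq_sqrt_min_div_max_sub_one_le i j
  rw [Int.cast_sub, Int.cast_natCast, Int.cast_natCast]
  nlinarith [sq_nonneg ‖b ((i : ℤ) - j)‖]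

theorem columns_uniformly_square_summable_general (b : ℤ → ℂ)
    (hsum : Summable fun l : ℤ => (l : ℝ) ^ 2 * ‖b l‖ ^ 2) (j : ℕ) :
    Summable (fun i : ℕ =>
      ‖Real.sqrt ((min i j + 1 : ℝ) / (max i j + 1)) * b ((i : ℤ) - j) - b ((i : ℤ) - j)‖ ^ 2) ∧
    (∑' i : ℕ,
      ‖Real.sqrt ((min i j + 1 : ℝ) / (max i j + 1)) * b ((i : ℤ) - j) - b ((i : ℤ) - j)‖ ^ 2) ≤
      Real.pi ^ 2 / 24 * ∑' l : ℤ, (l : ℝ) ^ 2 * ‖b l‖ ^ 2 := by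
  have hshift : Injective fun i : ℕ => (i : ℤ) - j := fun _ _ h => by simpa using h
  have hquarter : (1 : ℝ) / 4 ≤ Real.pi ^ 2 / 24 := by nlinarith [Real.pi_gt_three]
  refine summable_and_tsum_le_of_le_comp_injective hsum (fun _ => by positivity) hshift
    (by positivity) (fun _ => by positivity) fun i => ?_
  exact (norm_column_entry_sq_le b i j).trans
    (mul_le_mul_of_nonneg_right hquarter (by positivity))

theorem columns_uniformly_square_summable (b : ℤ → ℂ) (M : ℝ)
    (hM : ∀ l : ℤ, (1 + |(l : ℝ)|) * ‖b l‖ ≤ M)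
    (hsum : Summable fun l : ℤ => (l : ℝ) ^ 2 * ‖b l‖ ^ 2) (j : ℕ) :
    Summable (fun i : ℕ =>
      ‖Real.sqrt ((min i j + 1 : ℝ) / (max i j + 1)) * b ((i : ℤ) - j) - b ((i : ℤ) - j)‖ ^ 2) ∧
    (∑' i : ℕ,
      ‖Real.sqrt ((min i j + 1 : ℝ) / (max i j + 1)) * b ((i : ℤ) - j) - b ((i : ℤ) - j)‖ ^ 2) ≤
      Real.pi ^ 2 / 24 * ∑' l : ℤ, (l : ℝ) ^ 2 * ‖b l‖ ^ 2 :=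
  columns_uniformly_square_summable_general b hsum j
end
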